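/- arXiv:0912.3452 — 4 statements merged into one kernel-verified Lean document; each statement's English description precedes it below -/
import Mathlib

section
/- Let H be a Hopf quasigroup and M a right H-Hopf module with action (m,h) ↦ m·h and coaction ρ. Then M⊗H, equipped with the diagonal action (m⊗h)·g := m·g₍₁₎ ⊗ hg₍₂₎ and the coaction id⊗Δ : m⊗h ↦ m⊗h₍₁₎⊗h₍₂₎, is a right H-Hopf module. -/
open TensorProduct

noncomputable section

/-- The componentwise product on `H ⊗[k] H` induced by a bilinear multiplication on `H`:
`(a ⊗ b) * (c ⊗ d) = a c ⊗ b d`. -/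
def tmul2 (k : Type*) [Field k] (H : Type*) [AddCommGroup H] [Module k H]
    (mul : H →ₗ[k] H →ₗ[k] H) :
    H ⊗[k] H →ₗ[k] H ⊗[k] H →ₗ[k] H ⊗[k] H :=
  TensorProduct.curry
    ((TensorProduct.map (TensorProduct.lift mul) (TensorProduct.lift mul)).comp
      (TensorProduct.tensorTensorTensorComm k H H H H).toLinearMap)

/-- The common setup: a (not necessarily associative) unital algebra `H` with a
(not necessarily coassociative) counital coalgebra structure, such that the coproduct
and the counit are multiplicative and unital. -/
structure BialgQ (k : Type*) [Field k] (H : Type*) [AddCommGroup H] [Module k H] where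
  /-- the (bilinear, not necessarily associative) multiplication -/
  mul : H →ₗ[k] H →ₗ[k] H
  /-- the unit element -/
  one : H
  /-- the (not necessarily coassociative) comultiplication -/
  comul : H →ₗ[k] H ⊗[k] H
  /-- the counit -/
  counit : H →ₗ[k] k
  one_mul : ∀ h, mul one h = h
  mul_one : ∀ h, mul h one = h
  /-- counit law `(ε ⊗ id) ∘ Δ = id` -/
  counit_comul : ∀ h,
    TensorProduct.lid k H (TensorProduct.map counit LinearMap.id (comul h)) = h
  /-- counit law `(id ⊗ ε) ∘ Δ = id` -/
  comul_counit : ∀ h,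
    TensorProduct.rid k H (TensorProduct.map LinearMap.id counit (comul h)) = h
  /-- `Δ` is multiplicative -/
  comul_mul : ∀ g h, comul (mul g h) = tmul2 k H mul (comul g) (comul h)
  /-- `Δ` is unital -/
  comul_one : comul one = one ⊗ₜ[k] one
  /-- `ε` is multiplicative -/
  counit_mul : ∀ g h, counit (mul g h) = counit g * counit h
  /-- `ε` is unital -/
  counit_one : counit one = 1

namespace BialgQ

variable {k : Type*} [Field k] {H : Type*} [AddCommGroup H] [Module k H] (D : BialgQ k H)

/-- The multiplication as a linear map on the tensor product. -/
def mulMap : H ⊗[k] H →ₗ[k] H := TensorProduct.lift D.mul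

/-- The right Galois map `β : g ⊗ h ↦ g h₍₁₎ ⊗ h₍₂₎`. -/
def rGalois : H ⊗[k] H →ₗ[k] H ⊗[k] H :=
  (TensorProduct.map D.mulMap LinearMap.id).comp
    (((TensorProduct.assoc k H H H).symm.toLinearMap).comp
      (TensorProduct.map LinearMap.id D.comul))

/-- The left Galois map `γ : g ⊗ h ↦ g₍₁₎ ⊗ g₍₂₎ h`. -/
def lGalois : H ⊗[k] H →ₗ[k] H ⊗[k] H :=
  (TensorProduct.map LinearMap.id D.mulMap).comp
    (((TensorProduct.assoc k H H H).toLinearMap).comp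
      (TensorProduct.map D.comul LinearMap.id))

/-- `φ` is almost left `H`-linear: `φ(g ⊗ h) = (g ⊗ 1) · φ(1 ⊗ h)`. -/
def AlmostLeftLinear (φ : H ⊗[k] H →ₗ[k] H ⊗[k] H) : Prop :=
  ∀ g h : H, φ (g ⊗ₜ[k] h) = tmul2 k H D.mul (g ⊗ₜ[k] D.one) (φ (D.one ⊗ₜ[k] h))

/-- `φ` is almost right `H`-linear: `φ(g ⊗ h) = φ(g ⊗ 1) · (1 ⊗ h)`. -/
def AlmostRightLinear (φ : H ⊗[k] H →ₗ[k] H ⊗[k] H) : Prop :=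
  ∀ g h : H, φ (g ⊗ₜ[k] h) = tmul2 k H D.mul (φ (g ⊗ₜ[k] D.one)) (D.one ⊗ₜ[k] h)

/-- `φ` is almost right `H`-colinear: `φ(g ⊗ h) = (id ⊗ ε)(φ(g ⊗ h₍₁₎)) ⊗ h₍₂₎`. -/
def AlmostRightColinear (φ : H ⊗[k] H →ₗ[k] H ⊗[k] H) : Prop :=
  ∀ g h : H, φ (g ⊗ₜ[k] h) =
    TensorProduct.map
      ((TensorProduct.rid k H).toLinearMap.comp (TensorProduct.map LinearMap.id D.counit))
      LinearMap.id
      (TensorProduct.map φ LinearMap.id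
        ((TensorProduct.assoc k H H H).symm (g ⊗ₜ[k] D.comul h)))

/-- `φ` is almost left `H`-colinear: `φ(g ⊗ h) = g₍₁₎ ⊗ (ε ⊗ id)(φ(g₍₂₎ ⊗ h))`. -/
def AlmostLeftColinear (φ : H ⊗[k] H →ₗ[k] H ⊗[k] H) : Prop :=
  ∀ g h : H, φ (g ⊗ₜ[k] h) =
    TensorProduct.map LinearMap.id
      ((TensorProduct.lid k H).toLinearMap.comp (TensorProduct.map D.counit LinearMap.id))
      (TensorProduct.map LinearMap.id φ
        ((TensorProduct.assoc k H H H) (D.comul g ⊗ₜ[k] h)))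

/-- The candidate inverse `g ⊗ h ↦ g S(h₍₁₎) ⊗ h₍₂₎` of the right Galois map, built
from a linear map `S : H → H`. -/
def betaInvOf (S : H →ₗ[k] H) : H ⊗[k] H →ₗ[k] H ⊗[k] H :=
  (TensorProduct.map (D.mulMap.comp (TensorProduct.map LinearMap.id S)) LinearMap.id).comp
    (((TensorProduct.assoc k H H H).symm.toLinearMap).comp
      (TensorProduct.map LinearMap.id D.comul))

/-- The candidate inverse `g ⊗ h ↦ g₍₁₎ ⊗ (S g₍₂₎) h` of the left Galois map, built
from a linear map `S : H → H`. -/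
def gammaInvOf (S : H →ₗ[k] H) : H ⊗[k] H →ₗ[k] H ⊗[k] H :=
  (TensorProduct.map LinearMap.id (D.mulMap.comp (TensorProduct.map S LinearMap.id))).comp
    (((TensorProduct.assoc k H H H).toLinearMap).comp
      (TensorProduct.map D.comul LinearMap.id))

/-- The antipode produced from an inverse `φ` of the right Galois map:
`S h = (id ⊗ ε)(φ(1 ⊗ h))`. -/
def antipodeOf (φ : H ⊗[k] H →ₗ[k] H ⊗[k] H) : H →ₗ[k] H :=
  ((TensorProduct.rid k H).toLinearMap.comp
    ((TensorProduct.map LinearMap.id D.counit).comp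
      (φ.comp (TensorProduct.mk k H H D.one))))

end BialgQ

/-- A Hopf quasigroup. -/
structure HopfQuasigroup (k : Type*) [Field k] (H : Type*) [AddCommGroup H] [Module k H]
    extends BialgQ k H where
  /-- `Δ` is coassociative -/
  coassoc : ∀ h, TensorProduct.assoc k H H H
      (TensorProduct.map comul LinearMap.id (comul h)) =
    TensorProduct.map LinearMap.id comul (comul h)
  /-- the antipode -/
  S : H →ₗ[k] H
  /-- `(S h₍₁₎)(h₍₂₎ g) = ε(h) g` -/
  antipode₁ : ∀ h g, TensorProduct.lift mul
      (TensorProduct.map S (TensorProduct.lift mul)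
        (TensorProduct.assoc k H H H (comul h ⊗ₜ[k] g))) = counit h • g
  /-- `h₍₁₎((S h₍₂₎) g) = ε(h) g` -/
  antipode₂ : ∀ h g, TensorProduct.lift mul
      (TensorProduct.map LinearMap.id
        ((TensorProduct.lift mul).comp (TensorProduct.map S LinearMap.id))
        (TensorProduct.assoc k H H H (comul h ⊗ₜ[k] g))) = counit h • g
  /-- `(g h₍₁₎) S h₍₂₎ = ε(h) g` -/
  antipode₃ : ∀ g h, TensorProduct.lift mul
      (TensorProduct.map (TensorProduct.lift mul) S
        ((TensorProduct.assoc k H H H).symm (g ⊗ₜ[k] comul h))) = counit h • g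
  /-- `(g S h₍₁₎) h₍₂₎ = ε(h) g` -/
  antipode₄ : ∀ g h, TensorProduct.lift mul
      (TensorProduct.map ((TensorProduct.lift mul).comp (TensorProduct.map LinearMap.id S))
        LinearMap.id
        ((TensorProduct.assoc k H H H).symm (g ⊗ₜ[k] comul h))) = counit h • g

/-- A Hopf coquasigroup. -/
structure HopfCoquasigroup (k : Type*) [Field k] (H : Type*) [AddCommGroup H] [Module k H]
    extends BialgQ k H where
  /-- the multiplication is associative -/
  mul_assoc : ∀ g h l, mul (mul g h) l = mul g (mul h l)
  /-- the antipode -/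
  S : H →ₗ[k] H
  /-- `(S h₍₁₎) h₍₂₎₍₁₎ ⊗ h₍₂₎₍₂₎ = 1 ⊗ h` -/
  coantipode₁ : ∀ h,
    TensorProduct.map ((TensorProduct.lift mul).comp (TensorProduct.map S LinearMap.id))
      LinearMap.id
      ((TensorProduct.assoc k H H H).symm
        (TensorProduct.map LinearMap.id comul (comul h))) = one ⊗ₜ[k] h
  /-- `h₍₁₎ S(h₍₂₎₍₁₎) ⊗ h₍₂₎₍₂₎ = 1 ⊗ h` -/
  coantipode₂ : ∀ h,
    TensorProduct.map ((TensorProduct.lift mul).comp (TensorProduct.map LinearMap.id S))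
      LinearMap.id
      ((TensorProduct.assoc k H H H).symm
        (TensorProduct.map LinearMap.id comul (comul h))) = one ⊗ₜ[k] h
  /-- `h₍₁₎₍₁₎ ⊗ h₍₁₎₍₂₎ S h₍₂₎ = h ⊗ 1` -/
  coantipode₃ : ∀ h,
    TensorProduct.map LinearMap.id
      ((TensorProduct.lift mul).comp (TensorProduct.map LinearMap.id S))
      (TensorProduct.assoc k H H H
        (TensorProduct.map comul LinearMap.id (comul h))) = h ⊗ₜ[k] one
  /-- `h₍₁₎₍₁₎ ⊗ (S h₍₁₎₍₂₎) h₍₂₎ = h ⊗ 1` -/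
  coantipode₄ : ∀ h,
    TensorProduct.map LinearMap.id
      ((TensorProduct.lift mul).comp (TensorProduct.map S LinearMap.id))
      (TensorProduct.assoc k H H H
        (TensorProduct.map comul LinearMap.id (comul h))) = h ⊗ₜ[k] one

namespace HopfQuasigroup

variable {k : Type*} [Field k] {H : Type*} [AddCommGroup H] [Module k H]
  (Q : HopfQuasigroup k H)

/-- `M` is a right `H`-Hopf module over the Hopf quasigroup `Q`, with (bilinear, unital)
action `act` and (coassociative, counital) coaction `ρ`, satisfying
`(m·h₍₁₎)·Sh₍₂₎ = ε(h) m = (m·Sh₍₁₎)·h₍₂₎` and `ρ(m·h) = m₍₀₎·h₍₁₎ ⊗ m₍₁₎h₍₂₎`. -/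
def IsHopfModule {M : Type*} [AddCommGroup M] [Module k M]
    (act : M ⊗[k] H →ₗ[k] M) (ρ : M →ₗ[k] M ⊗[k] H) : Prop :=
  (∀ m, act (m ⊗ₜ[k] Q.one) = m) ∧
  (∀ m, TensorProduct.assoc k M H H (TensorProduct.map ρ LinearMap.id (ρ m)) =
      TensorProduct.map LinearMap.id Q.comul (ρ m)) ∧
  (∀ m, TensorProduct.rid k M (TensorProduct.map LinearMap.id Q.counit (ρ m)) = m) ∧
  (∀ m h, act (TensorProduct.map act Q.S
      ((TensorProduct.assoc k M H H).symm (m ⊗ₜ[k] Q.comul h))) = Q.counit h • m) ∧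
  (∀ m h, act (TensorProduct.map (act.comp (TensorProduct.map LinearMap.id Q.S)) LinearMap.id
      ((TensorProduct.assoc k M H H).symm (m ⊗ₜ[k] Q.comul h))) = Q.counit h • m) ∧
  (∀ m h, ρ (act (m ⊗ₜ[k] h)) =
      TensorProduct.map act (TensorProduct.lift Q.mul)
        (TensorProduct.tensorTensorTensorComm k M H H H (ρ m ⊗ₜ[k] Q.comul h)))

/-- `m ↦ (m₍₀₎ · S m₍₁₎) ⊗ m₍₂₎`. -/
def coinvPart {M : Type*} [AddCommGroup M] [Module k M]
    (act : M ⊗[k] H →ₗ[k] M) (ρ : M →ₗ[k] M ⊗[k] H) : M →ₗ[k] M ⊗[k] H :=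
  (TensorProduct.map (act.comp (TensorProduct.map LinearMap.id Q.S)) LinearMap.id).comp
    ((TensorProduct.map ρ LinearMap.id).comp ρ)

/-- The induced action `m ⊳ h = (m₍₀₎ · S m₍₁₎) · (m₍₂₎ h)` of a right Hopf module. -/
def inducedAct {M : Type*} [AddCommGroup M] [Module k M]
    (act : M ⊗[k] H →ₗ[k] M) (ρ : M →ₗ[k] M ⊗[k] H) : M ⊗[k] H →ₗ[k] M :=
  act.comp ((TensorProduct.map LinearMap.id (TensorProduct.lift Q.mul)).comp
    (((TensorProduct.assoc k M H H).toLinearMap).comp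
      (TensorProduct.map (Q.coinvPart act ρ) LinearMap.id)))

/-- The free action `(m ⊗ h) · g = m ⊗ h g` on `M ⊗ H`. -/
def freeAct (M : Type*) [AddCommGroup M] [Module k M] :
    (M ⊗[k] H) ⊗[k] H →ₗ[k] M ⊗[k] H :=
  (TensorProduct.map LinearMap.id (TensorProduct.lift Q.mul)).comp
    (TensorProduct.assoc k M H H).toLinearMap

/-- The coaction `id ⊗ Δ : m ⊗ h ↦ m ⊗ h₍₁₎ ⊗ h₍₂₎` on `M ⊗ H`. -/
def freeCoact (M : Type*) [AddCommGroup M] [Module k M] :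
    M ⊗[k] H →ₗ[k] (M ⊗[k] H) ⊗[k] H :=
  ((TensorProduct.assoc k M H H).symm.toLinearMap).comp
    (TensorProduct.map LinearMap.id Q.comul)

/-- The diagonal action `(m ⊗ h) · g = m · g₍₁₎ ⊗ h g₍₂₎` on `M ⊗ H`. -/
def diagAct {M : Type*} [AddCommGroup M] [Module k M]
    (act : M ⊗[k] H →ₗ[k] M) : (M ⊗[k] H) ⊗[k] H →ₗ[k] M ⊗[k] H :=
  (TensorProduct.map act (TensorProduct.lift Q.mul)).comp
    (((TensorProduct.tensorTensorTensorComm k M H H H).toLinearMap).comp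
      (TensorProduct.map LinearMap.id Q.comul))

/-- The coinvariants `M^{coH} = {m | ρ(m) = m ⊗ 1}` of a right `H`-comodule. -/
def coinvariants {M : Type*} [AddCommGroup M] [Module k M]
    (ρ : M →ₗ[k] M ⊗[k] H) : Submodule k M :=
  LinearMap.ker (ρ - (TensorProduct.mk k M H).flip Q.one)

end HopfQuasigroup

namespace HopfCoquasigroup

variable {k : Type*} [Field k] {H : Type*} [AddCommGroup H] [Module k H]
  (Q : HopfCoquasigroup k H)

/-- `M` is a right `H`-Hopf module over the Hopf coquasigroup `Q`, with (bilinear,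
associative, unital) action `act` and (counital, not necessarily coassociative)
coaction `ρ`, satisfying `m₍₀₎₍₀₎ ⊗ m₍₀₎₍₁₎ S m₍₁₎ = m ⊗ 1 = m₍₀₎₍₀₎ ⊗ (S m₍₀₎₍₁₎) m₍₁₎`
and `ρ(m·h) = m₍₀₎·h₍₁₎ ⊗ m₍₁₎h₍₂₎`. -/
def IsHopfModule {M : Type*} [AddCommGroup M] [Module k M]
    (act : M ⊗[k] H →ₗ[k] M) (ρ : M →ₗ[k] M ⊗[k] H) : Prop :=
  (∀ m, act (m ⊗ₜ[k] Q.one) = m) ∧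
  (∀ m g h, act (act (m ⊗ₜ[k] g) ⊗ₜ[k] h) = act (m ⊗ₜ[k] Q.mul g h)) ∧
  (∀ m, TensorProduct.rid k M (TensorProduct.map LinearMap.id Q.counit (ρ m)) = m) ∧
  (∀ m, TensorProduct.map LinearMap.id
      ((TensorProduct.lift Q.mul).comp (TensorProduct.map LinearMap.id Q.S))
      (TensorProduct.assoc k M H H (TensorProduct.map ρ LinearMap.id (ρ m)))
      = m ⊗ₜ[k] Q.one) ∧
  (∀ m, TensorProduct.map LinearMap.id
      ((TensorProduct.lift Q.mul).comp (TensorProduct.map Q.S LinearMap.id))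
      (TensorProduct.assoc k M H H (TensorProduct.map ρ LinearMap.id (ρ m)))
      = m ⊗ₜ[k] Q.one) ∧
  (∀ m h, ρ (act (m ⊗ₜ[k] h)) =
      TensorProduct.map act (TensorProduct.lift Q.mul)
        (TensorProduct.tensorTensorTensorComm k M H H H (ρ m ⊗ₜ[k] Q.comul h)))

/-- The induced coaction `λ(m) = ((m₍₀₎₍₀₎ · S m₍₀₎₍₁₎) · m₍₁₎₍₁₎) ⊗ m₍₁₎₍₂₎`. -/
def inducedCoact {M : Type*} [AddCommGroup M] [Module k M]
    (act : M ⊗[k] H →ₗ[k] M) (ρ : M →ₗ[k] M ⊗[k] H) : M →ₗ[k] M ⊗[k] H :=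
  (TensorProduct.map act LinearMap.id).comp
    (((TensorProduct.assoc k M H H).symm.toLinearMap).comp
      ((TensorProduct.map (act.comp (TensorProduct.map LinearMap.id Q.S)) LinearMap.id).comp
        ((TensorProduct.map ρ Q.comul).comp ρ)))

end HopfCoquasigroup


/-!
The axioms of `M ⊗ H` that only involve the coaction `id ⊗ Δ` are coassociativity and
counitality of `Δ`, and colinearity of the diagonal action is multiplicativity of `Δ`.
The substance lies in the two inverse properties of the diagonal action. Once
`Δ(S h) = S h₍₂₎ ⊗ S h₍₁₎` is known, for instance
`((m ⊗ n)·h₍₁₎)·S h₍₂₎ = (m·h₍₁₎)·S h₍₄₎ ⊗ (n h₍₂₎) S h₍₃₎`: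
the inner pair `h₍₂₎ ⊗ h₍₃₎` is contracted by the antipode axiom of `H`, then the outer pair
by that of `M`. The anti-comultiplicativity of `S` follows from the same computation with
`M = H`, applied to `Δ(S h₍₁₎) ⊗ h₍₂₎`, because `Δ(S h₍₁₎) Δ(h₍₂₎) = Δ((S h₍₁₎) h₍₂₎) = ε(h) 1 ⊗ 1`.
-/

theorem TensorProduct.assoc_symm_tmul_eq_map_mk {R M N P : Type*} [CommSemiring R]
    [AddCommMonoid M] [Module R M] [AddCommMonoid N] [Module R N]
    [AddCommMonoid P] [Module R P] (m : M) (t : N ⊗[R] P) :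
    (TensorProduct.assoc R M N P).symm (m ⊗ₜ t) = map (mk R M N m) .id t := by
  induction t using TensorProduct.induction_on with
  | zero => simp
  | tmul n p => rfl
  | add s t hs ht => simp [tmul_add, hs, ht]

namespace HopfQuasigroup

variable {k : Type*} [Field k] {H : Type*} [AddCommGroup H] [Module k H]
  (Q : HopfQuasigroup k H) {N : Type*} [AddCommGroup N] [Module k N]

theorem map_comul_id_comul (h : H) :
    map Q.comul .id (Q.comul h) =
      (TensorProduct.assoc k H H H).symm (map .id Q.comul (Q.comul h)) := by
  rw [← Q.coassoc h, LinearEquiv.symm_apply_apply]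

theorem assoc_comp_map_comul_comp_comul :
    (TensorProduct.assoc k H H H).toLinearMap ∘ₗ map Q.comul .id ∘ₗ Q.comul =
      map .id Q.comul ∘ₗ Q.comul :=
  LinearMap.ext Q.coassoc

theorem lid_comp_map_counit_comp_comul :
    ((TensorProduct.lid k H).toLinearMap ∘ₗ map Q.counit .id) ∘ₗ Q.comul = .id :=
  LinearMap.ext Q.counit_comul

/-- In Sweedler notation: if `Ψ ((a ⊗ e₍₁₎) ⊗ (e₍₂₎ ⊗ d)) = ε(e) F (a ⊗ d)`, then
`Ψ ((h₍₁₎ ⊗ h₍₂₎) ⊗ (h₍₃₎ ⊗ h₍₄₎)) = F (h₍₁₎ ⊗ h₍₂₎)`. -/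
theorem contract_middle {X : Type*} [AddCommGroup X] [Module k X]
    (Ψ : (H ⊗[k] H) ⊗[k] (H ⊗[k] H) →ₗ[k] X) (F : H ⊗[k] H →ₗ[k] X)
    (hΨ : ∀ a d, Ψ ∘ₗ map (TensorProduct.mk k H H a) ((TensorProduct.mk k H H).flip d) ∘ₗ Q.comul =
      Q.counit.smulRight (F (a ⊗ₜ d))) (h : H) :
    Ψ (map Q.comul Q.comul (Q.comul h)) = F (Q.comul h) := by
  have shuffle : ∀ a d (w : H ⊗[k] H),
      (TensorProduct.assoc k H H (H ⊗[k] H)).symm (a ⊗ₜ TensorProduct.assoc k H H H (w ⊗ₜ d)) =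
        map (TensorProduct.mk k H H a) ((TensorProduct.mk k H H).flip d) w := by
    intro a d w
    induction w using TensorProduct.induction_on with
    | zero => simp
    | tmul b c => rfl
    | add u v hu hv => simp only [add_tmul, tmul_add, map_add, hu, hv]
  have contract : Ψ ∘ₗ (TensorProduct.assoc k H H (H ⊗[k] H)).symm.toLinearMap ∘ₗ
      map .id ((TensorProduct.assoc k H H H).toLinearMap ∘ₗ map Q.comul .id) =
        F ∘ₗ map .id ((TensorProduct.lid k H).toLinearMap ∘ₗ map Q.counit .id) := by
    ext a e d
    simpa [shuffle] using LinearMap.congr_fun (hΨ a d) e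
  calc Ψ (map Q.comul Q.comul (Q.comul h))
      = Ψ ((TensorProduct.assoc k H H (H ⊗[k] H)).symm
          (map .id ((TensorProduct.assoc k H H H).toLinearMap ∘ₗ map Q.comul .id)
            (map .id Q.comul (Q.comul h)))) := by
        rw [map_map, LinearMap.comp_id, LinearMap.comp_assoc, assoc_comp_map_comul_comp_comul,
          ← LinearMap.comp_id LinearMap.id, TensorProduct.map_comp, LinearMap.comp_apply,
          ← map_map_assoc_symm, ← map_comul_id_comul, map_map]
        simp only [LinearMap.comp_id, map_id, LinearMap.id_comp]
    _ = F (map .id ((TensorProduct.lid k H).toLinearMap ∘ₗ map Q.counit .id)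
          (map .id Q.comul (Q.comul h))) := LinearMap.congr_fun contract _
    _ = F (Q.comul h) := by
        rw [map_map, LinearMap.comp_id, lid_comp_map_counit_comp_comul, map_id,
          LinearMap.id_apply]

def tensorAct (β : N ⊗[k] H →ₗ[k] N) : (N ⊗[k] H) ⊗[k] (H ⊗[k] H) →ₗ[k] N ⊗[k] H :=
  map β (lift Q.mul) ∘ₗ (tensorTensorTensorComm k N H H H).toLinearMap

theorem diagAct_eq (β : N ⊗[k] H →ₗ[k] N) :
    Q.diagAct β = Q.tensorAct β ∘ₗ map .id Q.comul := rfl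

theorem diagAct_tmul (β : N ⊗[k] H →ₗ[k] N) (z : N ⊗[k] H) (h : H) :
    Q.diagAct β (z ⊗ₜ h) = Q.tensorAct β (z ⊗ₜ Q.comul h) := rfl

theorem comul_mul_eq_tensorAct (g h : H) :
    Q.comul (Q.mul g h) = Q.tensorAct (lift Q.mul) (Q.comul g ⊗ₜ Q.comul h) :=
  Q.comul_mul g h

theorem tensorAct_mul_comp_mk_one_tmul_one :
    Q.tensorAct (lift Q.mul) ∘ₗ TensorProduct.mk k _ _ (Q.one ⊗ₜ Q.one) = .id := by
  ext a b
  simp [tensorAct, Q.one_mul]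

def actAntipode (β : N ⊗[k] H →ₗ[k] N) : N ⊗[k] (H ⊗[k] H) →ₗ[k] N :=
  β ∘ₗ map β Q.S ∘ₗ (TensorProduct.assoc k N H H).symm.toLinearMap

def antipodeAct (β : N ⊗[k] H →ₗ[k] N) : N ⊗[k] (H ⊗[k] H) →ₗ[k] N :=
  β ∘ₗ map (β ∘ₗ map .id Q.S) .id ∘ₗ (TensorProduct.assoc k N H H).symm.toLinearMap

/-- A unital action satisfying `(m·h₍₁₎)·S h₍₂₎ = ε(h) m = (m·S h₍₁₎)·h₍₂₎`. -/
structure IsQuasiModule (β : N ⊗[k] H →ₗ[k] N) : Prop where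
  act_one : ∀ m, β (m ⊗ₜ Q.one) = m
  actAntipode_comp_comul :
    Q.actAntipode β ∘ₗ map .id Q.comul = (TensorProduct.rid k N).toLinearMap ∘ₗ map .id Q.counit
  antipodeAct_comp_comul :
    Q.antipodeAct β ∘ₗ map .id Q.comul = (TensorProduct.rid k N).toLinearMap ∘ₗ map .id Q.counit

theorem isQuasiModule_mul : Q.IsQuasiModule (lift Q.mul) where
  act_one := Q.mul_one
  actAntipode_comp_comul := by ext g h; exact Q.antipode₃ g h
  antipodeAct_comp_comul := by ext g h; exact Q.antipode₄ g h

theorem IsHopfModule.isQuasiModule {act : N ⊗[k] H →ₗ[k] N} {ρ : N →ₗ[k] N ⊗[k] H}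
    (hM : Q.IsHopfModule act ρ) : Q.IsQuasiModule act where
  act_one := hM.1
  actAntipode_comp_comul := by ext m h; exact hM.2.2.2.1 m h
  antipodeAct_comp_comul := by ext m h; exact hM.2.2.2.2.1 m h

theorem lift_mul_map_antipode_comul (h : H) :
    lift Q.mul (map Q.S .id (Q.comul h)) = Q.counit h • Q.one := by
  have : Q.antipodeAct (lift Q.mul) ∘ₗ TensorProduct.mk k H (H ⊗[k] H) Q.one =
      lift Q.mul ∘ₗ map Q.S .id := by
    ext a b
    simp [antipodeAct, Q.one_mul]
  rw [← LinearMap.comp_apply (lift Q.mul), ← this]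
  simpa using LinearMap.congr_fun Q.isQuasiModule_mul.antipodeAct_comp_comul (Q.one ⊗ₜ h)

def antipodeCop : H →ₗ[k] H ⊗[k] H :=
  (TensorProduct.comm k H H).toLinearMap ∘ₗ map Q.S Q.S ∘ₗ Q.comul

theorem tensorAct_comp_map_diagAct_antipodeCop {β : N ⊗[k] H →ₗ[k] N}
    (hβ : Q.actAntipode β ∘ₗ map .id Q.comul =
      (TensorProduct.rid k N).toLinearMap ∘ₗ map .id Q.counit) :
    Q.tensorAct β ∘ₗ map (Q.diagAct β) Q.antipodeCop ∘ₗ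
        (TensorProduct.assoc k (N ⊗[k] H) H H).symm.toLinearMap ∘ₗ map .id Q.comul =
      (TensorProduct.rid k (N ⊗[k] H)).toLinearMap ∘ₗ map .id Q.counit := by
  refine TensorProduct.ext_threefold fun x n h => ?_
  let U := Q.actAntipode β ∘ₗ TensorProduct.mk k N (H ⊗[k] H) x
  let V := Q.actAntipode (lift Q.mul) ∘ₗ TensorProduct.mk k H (H ⊗[k] H) n
  let Ψ := Q.tensorAct β ∘ₗ map (Q.tensorAct β ∘ₗ TensorProduct.mk k _ _ (x ⊗ₜ n))
    ((TensorProduct.comm k H H).toLinearMap ∘ₗ map Q.S Q.S)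
  have hΨ : ∀ a d, Ψ ∘ₗ map (TensorProduct.mk k H H a) ((TensorProduct.mk k H H).flip d) =
      TensorProduct.mk k N H (U (a ⊗ₜ d)) ∘ₗ V := by
    intro a d
    ext b c
    simp [Ψ, U, V, tensorAct, actAntipode]
  have hU : U (Q.comul h) = Q.counit h • x := by
    simpa [U] using LinearMap.congr_fun hβ (x ⊗ₜ h)
  have hV : V ∘ₗ Q.comul = Q.counit.smulRight n := by
    ext e
    simpa [V] using LinearMap.congr_fun Q.isQuasiModule_mul.actAntipode_comp_comul (n ⊗ₜ e)
  have hδ : map (Q.diagAct β ∘ₗ TensorProduct.mk k _ _ (x ⊗ₜ n)) Q.antipodeCop =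
      map (Q.tensorAct β ∘ₗ TensorProduct.mk k _ _ (x ⊗ₜ n))
        ((TensorProduct.comm k H H).toLinearMap ∘ₗ map Q.S Q.S) ∘ₗ map Q.comul Q.comul := by
    rw [← map_comp]
    rfl
  have key := Q.contract_middle Ψ ((TensorProduct.mk k N H).flip n ∘ₗ U) (fun a d => by
    rw [← LinearMap.comp_assoc, hΨ, LinearMap.comp_assoc, hV]
    ext e
    simp) h
  simp only [LinearMap.comp_apply, LinearEquiv.coe_coe, map_tmul, LinearMap.id_apply, rid_tmul]
  rw [TensorProduct.assoc_symm_tmul_eq_map_mk, map_map, LinearMap.comp_id, hδ,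
    LinearMap.comp_apply]
  change Ψ _ = _
  rw [key, LinearMap.comp_apply, hU]
  simp [smul_tmul']

theorem diagAct_comp_map_tensorAct_antipodeCop {β : N ⊗[k] H →ₗ[k] N}
    (hβ : Q.antipodeAct β ∘ₗ map .id Q.comul =
      (TensorProduct.rid k N).toLinearMap ∘ₗ map .id Q.counit) :
    Q.diagAct β ∘ₗ map (Q.tensorAct β ∘ₗ map .id Q.antipodeCop) .id ∘ₗ
        (TensorProduct.assoc k (N ⊗[k] H) H H).symm.toLinearMap ∘ₗ map .id Q.comul =
      (TensorProduct.rid k (N ⊗[k] H)).toLinearMap ∘ₗ map .id Q.counit := by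
  refine TensorProduct.ext_threefold fun x n h => ?_
  let U := Q.antipodeAct β ∘ₗ TensorProduct.mk k N (H ⊗[k] H) x
  let V := Q.antipodeAct (lift Q.mul) ∘ₗ TensorProduct.mk k H (H ⊗[k] H) n
  let Ψ := Q.tensorAct β ∘ₗ map (Q.tensorAct β ∘ₗ TensorProduct.mk k _ _ (x ⊗ₜ n) ∘ₗ
    (TensorProduct.comm k H H).toLinearMap ∘ₗ map Q.S Q.S) .id
  have hΨ : ∀ a d, Ψ ∘ₗ map (TensorProduct.mk k H H a) ((TensorProduct.mk k H H).flip d) =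
      (TensorProduct.mk k N H).flip (V (a ⊗ₜ d)) ∘ₗ U := by
    intro a d
    ext b c
    simp [Ψ, U, V, tensorAct, antipodeAct]
  have hU : U ∘ₗ Q.comul = Q.counit.smulRight x := by
    ext e
    simpa [U] using LinearMap.congr_fun hβ (x ⊗ₜ e)
  have hV : V (Q.comul h) = Q.counit h • n := by
    simpa [V] using LinearMap.congr_fun Q.isQuasiModule_mul.antipodeAct_comp_comul (n ⊗ₜ h)
  have hδ : map ((Q.tensorAct β ∘ₗ map .id Q.antipodeCop) ∘ₗ TensorProduct.mk k _ _ (x ⊗ₜ n))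
      Q.comul = map (Q.tensorAct β ∘ₗ TensorProduct.mk k _ _ (x ⊗ₜ n) ∘ₗ
        (TensorProduct.comm k H H).toLinearMap ∘ₗ map Q.S Q.S) .id ∘ₗ map Q.comul Q.comul := by
    rw [← map_comp]
    rfl
  have key := Q.contract_middle Ψ (TensorProduct.mk k N H x ∘ₗ V) (fun a d => by
    rw [← LinearMap.comp_assoc, hΨ, LinearMap.comp_assoc, hU]
    ext e
    simp [smul_tmul']) h
  simp only [LinearMap.comp_apply, LinearEquiv.coe_coe, map_tmul, LinearMap.id_apply, rid_tmul]
  rw [TensorProduct.assoc_symm_tmul_eq_map_mk, map_map, diagAct_eq, LinearMap.comp_apply, map_map]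
  simp only [LinearMap.comp_id, LinearMap.id_comp]
  rw [hδ, LinearMap.comp_apply]
  change Ψ _ = _
  rw [key, LinearMap.comp_apply, hV]
  simp

theorem comul_comp_antipode : Q.comul ∘ₗ Q.S = Q.antipodeCop := by
  have hΞ := Q.tensorAct_comp_map_diagAct_antipodeCop Q.isQuasiModule_mul.actAntipode_comp_comul
  have hcounit : ((TensorProduct.rid k (H ⊗[k] H)).toLinearMap ∘ₗ map .id Q.counit) ∘ₗ
      map (Q.comul ∘ₗ Q.S) .id =
        (Q.comul ∘ₗ Q.S) ∘ₗ (TensorProduct.rid k H).toLinearMap ∘ₗ map .id Q.counit := by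
    ext a b
    simp
  have hunit : Q.diagAct (lift Q.mul) ∘ₗ map (Q.comul ∘ₗ Q.S) .id ∘ₗ Q.comul =
      Q.counit.smulRight (Q.one ⊗ₜ Q.one) := by
    have : Q.diagAct (lift Q.mul) ∘ₗ map (Q.comul ∘ₗ Q.S) .id =
        Q.comul ∘ₗ lift Q.mul ∘ₗ map Q.S .id := by
      ext a b
      simp [diagAct_tmul, comul_mul_eq_tensorAct]
    ext h
    rw [← LinearMap.comp_assoc, this]
    simp [lift_mul_map_antipode_comul, Q.comul_one]
  have hone : Q.tensorAct (lift Q.mul) ∘ₗ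
      map (Q.counit.smulRight (Q.one ⊗ₜ Q.one)) Q.antipodeCop =
        Q.antipodeCop ∘ₗ (TensorProduct.lid k H).toLinearMap ∘ₗ map Q.counit .id := by
    ext a b
    simp only [AlgebraTensorModule.curry_apply, curry_apply, LinearMap.coe_restrictScalars,
      LinearMap.comp_apply, map_tmul, LinearMap.smulRight_apply, LinearEquiv.coe_coe,
      LinearMap.id_apply, lid_tmul, map_smul, ← smul_tmul']
    rw [← TensorProduct.mk_apply, ← LinearMap.comp_apply (Q.tensorAct _),
      Q.tensorAct_mul_comp_mk_one_tmul_one, LinearMap.id_apply]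
  ext h
  calc Q.comul (Q.S h)
      = ((TensorProduct.rid k (H ⊗[k] H)).toLinearMap ∘ₗ map .id Q.counit)
          (map (Q.comul ∘ₗ Q.S) .id (Q.comul h)) := by
        conv_lhs => rw [← Q.comul_counit h]
        exact (LinearMap.congr_fun hcounit (Q.comul h)).symm
    _ = Q.tensorAct (lift Q.mul) (map (Q.diagAct (lift Q.mul) ∘ₗ map (Q.comul ∘ₗ Q.S) .id ∘ₗ
          Q.comul) Q.antipodeCop (Q.comul h)) := by
        rw [← hΞ]
        simp only [LinearMap.comp_apply, LinearEquiv.coe_coe]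
        congr 1
        have : map .id Q.comul (map (Q.comul ∘ₗ Q.S) .id (Q.comul h)) =
            map (Q.comul ∘ₗ Q.S) (map .id .id) (map .id Q.comul (Q.comul h)) := by
          simp only [map_map, map_id, LinearMap.comp_id, LinearMap.id_comp]
        rw [this, ← map_map_assoc_symm, ← map_comul_id_comul, map_map, map_map]
        simp only [LinearMap.comp_id, LinearMap.comp_assoc]
    _ = Q.antipodeCop h := by
        rw [hunit, ← LinearMap.comp_apply (Q.tensorAct _), hone]
        simp [Q.counit_comul]

theorem actAntipode_diagAct (β : N ⊗[k] H →ₗ[k] N) :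
    Q.actAntipode (Q.diagAct β) = Q.tensorAct β ∘ₗ map (Q.diagAct β) Q.antipodeCop ∘ₗ
      (TensorProduct.assoc k (N ⊗[k] H) H H).symm.toLinearMap := by
  have : map (Q.diagAct β) (Q.comul ∘ₗ Q.S) = map .id Q.comul ∘ₗ map (Q.diagAct β) Q.S := by
    rw [← map_comp]; rfl
  rw [← comul_comp_antipode, this]
  rfl

theorem antipodeAct_diagAct (β : N ⊗[k] H →ₗ[k] N) :
    Q.antipodeAct (Q.diagAct β) =
      Q.diagAct β ∘ₗ map (Q.tensorAct β ∘ₗ map .id Q.antipodeCop) .id ∘ₗ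
        (TensorProduct.assoc k (N ⊗[k] H) H H).symm.toLinearMap := by
  have : map .id (Q.comul ∘ₗ Q.S) = map .id Q.comul ∘ₗ map (.id : N ⊗[k] H →ₗ[k] _) Q.S := by
    rw [← map_comp]; rfl
  rw [← comul_comp_antipode, this]
  rfl

theorem IsQuasiModule.diagAct {β : N ⊗[k] H →ₗ[k] N} (hβ : Q.IsQuasiModule β) :
    Q.IsQuasiModule (Q.diagAct β) where
  act_one z := by
    induction z using TensorProduct.induction_on with
    | zero => simp
    | tmul x n => simp [diagAct_tmul, Q.comul_one, tensorAct, hβ.act_one, Q.mul_one]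
    | add u v hu hv => rw [add_tmul, map_add, hu, hv]
  actAntipode_comp_comul := by
    rw [actAntipode_diagAct]
    simpa only [LinearMap.comp_assoc] using
      Q.tensorAct_comp_map_diagAct_antipodeCop hβ.actAntipode_comp_comul
  antipodeAct_comp_comul := by
    rw [antipodeAct_diagAct]
    simpa only [LinearMap.comp_assoc] using
      Q.diagAct_comp_map_tensorAct_antipodeCop hβ.antipodeAct_comp_comul

theorem freeCoact_tmul (m : N) (n : H) :
    Q.freeCoact N (m ⊗ₜ n) = map (TensorProduct.mk k N H m) .id (Q.comul n) :=
  TensorProduct.assoc_symm_tmul_eq_map_mk m _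

theorem freeCoact_coassoc (z : N ⊗[k] H) :
    TensorProduct.assoc k (N ⊗[k] H) H H (map (Q.freeCoact N) .id (Q.freeCoact N z)) =
      map .id Q.comul (Q.freeCoact N z) := by
  induction z using TensorProduct.induction_on with
  | zero => simp
  | tmul m n =>
    have hm : Q.freeCoact N ∘ₗ TensorProduct.mk k N H m =
        map (TensorProduct.mk k N H m) .id ∘ₗ Q.comul :=
      LinearMap.ext (Q.freeCoact_tmul m)
    have split : map (map (TensorProduct.mk k N H m) .id ∘ₗ Q.comul) (.id : H →ₗ[k] H) =
        map (map (TensorProduct.mk k N H m) .id) .id ∘ₗ map Q.comul .id := by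
      rw [← map_comp]; rfl
    rw [freeCoact_tmul, map_map, LinearMap.id_comp, hm, split, LinearMap.comp_apply,
      ← map_map_assoc, Q.coassoc n, map_map, map_map]
    simp
  | add u v hu hv => simp only [map_add, hu, hv]

theorem freeCoact_counit (z : N ⊗[k] H) :
    TensorProduct.rid k (N ⊗[k] H) (map .id Q.counit (Q.freeCoact N z)) = z := by
  induction z using TensorProduct.induction_on with
  | zero => simp
  | tmul m n =>
    rw [freeCoact_tmul, map_map]
    conv_rhs => rw [← Q.comul_counit n]
    induction Q.comul n using TensorProduct.induction_on with
    | zero => simp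
    | tmul a b => simp [tmul_smul]
    | add u v hu hv => simp only [map_add, hu, hv, tmul_add]
  | add u v hu hv => simp only [map_add, hu, hv]

theorem freeCoact_diagAct (β : N ⊗[k] H →ₗ[k] N) (z : N ⊗[k] H) (h : H) :
    Q.freeCoact N (Q.diagAct β (z ⊗ₜ h)) =
      map (Q.diagAct β) (lift Q.mul)
        (tensorTensorTensorComm k (N ⊗[k] H) H H H (Q.freeCoact N z ⊗ₜ Q.comul h)) := by
  induction z using TensorProduct.induction_on with
  | zero => simp
  | add u v hu hv => simp only [add_tmul, map_add, hu, hv]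
  | tmul x n =>
    let Φ₁ := (TensorProduct.assoc k N H H).symm.toLinearMap ∘ₗ
      map (β ∘ₗ TensorProduct.mk k N H x) (Q.tensorAct (lift Q.mul)) ∘ₗ
        (TensorProduct.leftComm k (H ⊗[k] H) H (H ⊗[k] H)).toLinearMap
    let Φ₂ := map (Q.tensorAct β) (lift Q.mul) ∘ₗ
      (tensorTensorTensorComm k (N ⊗[k] H) H (H ⊗[k] H) H).toLinearMap ∘ₗ
        map ((TensorProduct.assoc k N H H).symm.toLinearMap ∘ₗ TensorProduct.mk k N _ x)
          (TensorProduct.assoc k H H H).symm.toLinearMap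
    have hΦ : Φ₁ = Φ₂ := by
      ext
      simp [Φ₁, Φ₂, tensorAct]
    have hL : ∀ t, Q.freeCoact N (Q.tensorAct β ((x ⊗ₜ n) ⊗ₜ t)) =
        Φ₁ (Q.comul n ⊗ₜ map .id Q.comul t) := by
      intro t
      induction t using TensorProduct.induction_on with
      | zero => simp
      | tmul a b => simp [Φ₁, tensorAct, freeCoact, comul_mul_eq_tensorAct]
      | add u v hu hv => simp only [tmul_add, map_add, hu, hv]
    have hR : map (Q.diagAct β) (lift Q.mul) ∘ₗ
        (tensorTensorTensorComm k (N ⊗[k] H) H H H).toLinearMap =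
          map (Q.tensorAct β) (lift Q.mul) ∘ₗ
            (tensorTensorTensorComm k (N ⊗[k] H) H (H ⊗[k] H) H).toLinearMap ∘ₗ
              map .id (map Q.comul .id) := by
      ext
      simp [diagAct_tmul]
    have hR' := LinearMap.congr_fun hR (Q.freeCoact N (x ⊗ₜ n) ⊗ₜ Q.comul h)
    simp only [LinearMap.comp_apply, LinearEquiv.coe_coe] at hR'
    rw [diagAct_tmul, hL, hΦ, hR']
    simp [Φ₂, freeCoact, map_comul_id_comul]

end HopfQuasigroup

/-- For a right Hopf module `M` over a Hopf quasigroup, `M ⊗ H` with the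
diagonal action `(m ⊗ h) · g = m · g₍₁₎ ⊗ h g₍₂₎` and the coaction `id ⊗ Δ` is a right
`H`-Hopf module. -/
theorem stmt11 {k : Type*} [Field k] {H : Type*} [AddCommGroup H] [Module k H]
    (Q : HopfQuasigroup k H) {M : Type*} [AddCommGroup M] [Module k M]
    (act : M ⊗[k] H →ₗ[k] M) (ρ : M →ₗ[k] M ⊗[k] H)
    (hM : Q.IsHopfModule act ρ) :
    Q.IsHopfModule (Q.diagAct act) (Q.freeCoact M) := by
  have hMH := hM.isQuasiModule.diagAct
  refine ⟨hMH.act_one, Q.freeCoact_coassoc, Q.freeCoact_counit, fun z h => ?_, fun z h => ?_,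
    Q.freeCoact_diagAct act⟩
  · simpa [HopfQuasigroup.actAntipode] using
      LinearMap.congr_fun hMH.actAntipode_comp_comul (z ⊗ₜ h)
  · simpa [HopfQuasigroup.antipodeAct] using
      LinearMap.congr_fun hMH.antipodeAct_comp_comul (z ⊗ₜ h)
end
end

section
/- Let H be a Hopf quasigroup and M a right H-Hopf module with action (m,h) ↦ m·h and coaction ρ. Regard M⊗H as a right H-Hopf module with the diagonal action (m⊗h)·g := m·g₍₁₎ ⊗ hg₍₂₎ and coaction id⊗Δ. Then the coaction ρ : M → M⊗H is a morphism of right H-Hopf modules, i.e. it is right H-colinear ((ρ⊗id)∘ρ = (id⊗Δ)∘ρ) and H-quasilinear: ρ((m₍₀₎·Sm₍₁₎)·(m₍₂₎h)) = (ρ(m₍₀₎)·Sm₍₁₎)·(m₍₂₎h) for all m ∈ M, h ∈ H. -/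
open TensorProduct

noncomputable section

/-!
Colinearity of `ρ` is its coassociativity, read through the associator. Quasilinearity is the
Hopf module compatibility `ρ(m · h) = ρ(m) · h`: it makes `ρ` right `H`-linear for the diagonal
action on `M ⊗ H`, and a linear map intertwining two right actions commutes with every
expression `(x · φ y) · ψ z` built from them, here with `φ = S` and `ψ = (· h)`.
-/

section

variable {k : Type*} [Field k] {H : Type*} [AddCommGroup H] [Module k H]

theorem apply_act_act_eq_of_apply_act_eq {M N : Type*} [AddCommGroup M] [Module k M]
    [AddCommGroup N] [Module k N] (actM : M ⊗[k] H →ₗ[k] M) (actN : N ⊗[k] H →ₗ[k] N)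
    (f : M →ₗ[k] N) (hf : ∀ x, f (actM x) = actN (TensorProduct.map f LinearMap.id x))
    (φ ψ : H →ₗ[k] H) (s : (M ⊗[k] H) ⊗[k] H) :
    f (actM (TensorProduct.map LinearMap.id ψ
        (TensorProduct.map (actM.comp (TensorProduct.map LinearMap.id φ)) LinearMap.id s))) =
      actN (TensorProduct.map LinearMap.id ψ
        (TensorProduct.map (actN.comp (TensorProduct.map LinearMap.id φ)) LinearMap.id
          (TensorProduct.map (TensorProduct.map f LinearMap.id) LinearMap.id s))) := by
  induction s using TensorProduct.induction_on with
  | zero => simp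
  | tmul x z =>
    have hφ : TensorProduct.map f LinearMap.id (TensorProduct.map LinearMap.id φ x) =
        TensorProduct.map LinearMap.id φ (TensorProduct.map f LinearMap.id x) := by
      simp only [← LinearMap.comp_apply, ← TensorProduct.map_comp, LinearMap.id_comp,
        LinearMap.comp_id]
    simp only [TensorProduct.map_tmul, LinearMap.comp_apply, LinearMap.id_apply, hf, hφ]
  | add s t hs ht => simp only [map_add, hs, ht]

namespace HopfQuasigroup

variable (Q : HopfQuasigroup k H) {M : Type*} [AddCommGroup M] [Module k M]
  {act : M ⊗[k] H →ₗ[k] M} {ρ : M →ₗ[k] M ⊗[k] H}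

theorem inducedAct_tmul (m : M) (h : H) :
    Q.inducedAct act ρ (m ⊗ₜ[k] h) =
      act (TensorProduct.map LinearMap.id (Q.mul.flip h) (Q.coinvPart act ρ m)) := by
  suffices ∀ c : M ⊗[k] H,
      TensorProduct.map LinearMap.id (TensorProduct.lift Q.mul)
        (TensorProduct.assoc k M H H (c ⊗ₜ[k] h)) =
      TensorProduct.map LinearMap.id (Q.mul.flip h) c from
    congrArg act (this _)
  intro c
  induction c using TensorProduct.induction_on with
  | zero => simp
  | tmul n g => simp
  | add c d hc hd => simp only [TensorProduct.add_tmul, map_add, hc, hd]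

variable {Q}

theorem IsHopfModule.map_coaction_coaction (hM : Q.IsHopfModule act ρ) (m : M) :
    TensorProduct.map ρ LinearMap.id (ρ m) = Q.freeCoact M (ρ m) := by
  rw [freeCoact, LinearMap.comp_apply, ← hM.2.1 m]
  exact ((TensorProduct.assoc k M H H).symm_apply_apply _).symm

theorem IsHopfModule.coaction_act (hM : Q.IsHopfModule act ρ) (x : M ⊗[k] H) :
    ρ (act x) = Q.diagAct act (TensorProduct.map ρ LinearMap.id x) := by
  induction x using TensorProduct.induction_on with
  | zero => simp
  | tmul m h => simp [hM.2.2.2.2.2 m h, diagAct]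
  | add x y hx hy => simp only [map_add, hx, hy]

end HopfQuasigroup

end

/-- For a right Hopf module `M` over a Hopf quasigroup, the coaction
`ρ : M → M ⊗ H` (with `M ⊗ H` carrying the diagonal action and coaction `id ⊗ Δ`) is a
morphism of right `H`-Hopf modules: it is right `H`-colinear, `(ρ ⊗ id) ∘ ρ = (id ⊗ Δ) ∘ ρ`,
and `H`-quasilinear, `ρ((m₍₀₎·Sm₍₁₎)·(m₍₂₎h)) = (ρ(m₍₀₎)·Sm₍₁₎)·(m₍₂₎h)`. -/
theorem stmt12 {k : Type*} [Field k] {H : Type*} [AddCommGroup H] [Module k H]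
    (Q : HopfQuasigroup k H) {M : Type*} [AddCommGroup M] [Module k M]
    (act : M ⊗[k] H →ₗ[k] M) (ρ : M →ₗ[k] M ⊗[k] H)
    (hM : Q.IsHopfModule act ρ) :
    (∀ m : M, TensorProduct.map ρ LinearMap.id (ρ m) = Q.freeCoact M (ρ m)) ∧
    (∀ (m : M) (h : H),
      ρ (Q.inducedAct act ρ (m ⊗ₜ[k] h)) =
      Q.diagAct act
        (TensorProduct.map LinearMap.id (Q.mul.flip h)
          (TensorProduct.map ((Q.diagAct act).comp (TensorProduct.map LinearMap.id Q.S))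
            LinearMap.id
            (TensorProduct.map (TensorProduct.map ρ LinearMap.id) LinearMap.id
              (TensorProduct.map ρ LinearMap.id (ρ m)))))) := by
  refine ⟨hM.map_coaction_coaction, fun m h => ?_⟩
  rw [Q.inducedAct_tmul, HopfQuasigroup.coinvPart, LinearMap.comp_apply]
  exact apply_act_act_eq_of_apply_act_eq act (Q.diagAct act) ρ hM.coaction_act Q.S
    (Q.mul.flip h) _
end
end

section
/- Let H be a Hopf quasigroup, let M and N be right H-Hopf modules, and let f : M → N be a linear map that is right H-colinear and H-quasilinear. Then f(m₍₀₎·Sm₍₁₎) = f(m₍₀₎)·Sm₍₁₎ for all m ∈ M. -/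
open TensorProduct

noncomputable section

/-!
Colinearity and quasilinearity of `f` reduce the claim to the identity
`m₍₀₎ ⊳ S m₍₁₎ = m₍₀₎ · S m₍₁₎` in a single Hopf module. By coassociativity of the coaction,
`m₍₀₎ ⊳ S m₍₁₎ = (m₍₀₎ · S m₍₁₎) · (m₍₂₎ S m₍₃₎)`, and `h₍₁₎ S h₍₂₎ = ε(h) 1` (the antipode
axiom `(g h₍₁₎) S h₍₂₎ = ε(h) g` at `g = 1`) collapses this to `m₍₀₎ · S m₍₁₎` by counitality.
-/

namespace HopfQuasigroup

variable {k : Type*} [Field k] {H : Type*} [AddCommGroup H] [Module k H]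
  (Q : HopfQuasigroup k H)

theorem mul_antipode_lTensor_comul_apply (h : H) :
    lift Q.mul (map LinearMap.id Q.S (Q.comul h)) = Q.counit h • Q.one := by
  have one_mul_left : ∀ x : H ⊗[k] H,
      lift Q.mul (map (lift Q.mul) Q.S ((TensorProduct.assoc k H H H).symm (Q.one ⊗ₜ x))) =
        lift Q.mul (map LinearMap.id Q.S x) := by
    intro x
    induction x using TensorProduct.induction_on with
    | zero => simp
    | tmul p q => simp [Q.one_mul]
    | add u v hu hv => simp only [tmul_add, map_add, hu, hv]
  rw [← one_mul_left, Q.antipode₃]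

theorem mul_antipode_lTensor_comul :
    (lift Q.mul ∘ₗ map LinearMap.id Q.S) ∘ₗ Q.comul = Q.counit.smulRight Q.one :=
  LinearMap.ext Q.mul_antipode_lTensor_comul_apply

variable {M : Type*} [AddCommGroup M] [Module k M] (act : M ⊗[k] H →ₗ[k] M)

theorem act_comp_map_smulRight_counit (hunit : ∀ m, act (m ⊗ₜ[k] Q.one) = m)
    {X : Type*} [AddCommGroup X] [Module k X] (g : X →ₗ[k] M) :
    act ∘ₗ map g (Q.counit.smulRight Q.one) =
      g ∘ₗ (TensorProduct.rid k X).toLinearMap ∘ₗ map LinearMap.id Q.counit := by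
  ext x h
  simp [hunit]

variable (ρ : M →ₗ[k] M ⊗[k] H)

theorem coinvPart_rTensor_coaction
    (hcoassoc : ∀ m, TensorProduct.assoc k M H H (map ρ LinearMap.id (ρ m)) =
      map LinearMap.id Q.comul (ρ m)) (m : M) :
    map (Q.coinvPart act ρ) LinearMap.id (ρ m) =
      (TensorProduct.assoc k M H H).symm
        (map ((act ∘ₗ map LinearMap.id Q.S) ∘ₗ ρ) Q.comul (ρ m)) := by
  have hρ : map ρ LinearMap.id (ρ m) =
      (TensorProduct.assoc k M H H).symm (map LinearMap.id Q.comul (ρ m)) := by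
    rw [← hcoassoc, LinearEquiv.symm_apply_apply]
  calc map (Q.coinvPart act ρ) LinearMap.id (ρ m)
      = map (map (act ∘ₗ map LinearMap.id Q.S) LinearMap.id) LinearMap.id
          (map (map ρ LinearMap.id) LinearMap.id (map ρ LinearMap.id (ρ m))) := by
        simp only [coinvPart, map_map, LinearMap.comp_id]
    _ = _ := by
        rw [hρ, map_map_assoc_symm, map_map_assoc_symm, map_map, map_map]
        simp only [LinearMap.comp_id, LinearMap.id_comp, map_id]

theorem inducedAct_lTensor_antipode_coaction (hunit : ∀ m, act (m ⊗ₜ[k] Q.one) = m)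
    (hcounit : ∀ m, TensorProduct.rid k M (map LinearMap.id Q.counit (ρ m)) = m)
    (hcoassoc : ∀ m, TensorProduct.assoc k M H H (map ρ LinearMap.id (ρ m)) =
      map LinearMap.id Q.comul (ρ m)) (m : M) :
    Q.inducedAct act ρ (map LinearMap.id Q.S (ρ m)) = act (map LinearMap.id Q.S (ρ m)) := by
  calc Q.inducedAct act ρ (map LinearMap.id Q.S (ρ m))
      = act (map LinearMap.id (lift Q.mul) (TensorProduct.assoc k M H H
          (map (map LinearMap.id LinearMap.id) Q.S
            (map (Q.coinvPart act ρ) LinearMap.id (ρ m))))) := by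
        simp only [inducedAct, LinearMap.comp_apply, LinearEquiv.coe_coe, map_map,
          LinearMap.comp_id, LinearMap.id_comp, map_id]
    _ = act (map ((act ∘ₗ map LinearMap.id Q.S) ∘ₗ ρ)
          ((lift Q.mul ∘ₗ map LinearMap.id Q.S) ∘ₗ Q.comul) (ρ m)) := by
        rw [coinvPart_rTensor_coaction Q act ρ hcoassoc, ← map_map_assoc,
          LinearEquiv.apply_symm_apply, map_map, map_map]
        simp only [LinearMap.id_comp]
    _ = act (map LinearMap.id Q.S
          (ρ (TensorProduct.rid k M (map LinearMap.id Q.counit (ρ m))))) := by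
        rw [mul_antipode_lTensor_comul, ← LinearMap.comp_apply act,
          act_comp_map_smulRight_counit Q act hunit]
        rfl
    _ = act (map LinearMap.id Q.S (ρ m)) := by rw [hcounit]

end HopfQuasigroup

/-- If `f : M → N` is a right `H`-colinear and `H`-quasilinear map of right
Hopf modules over a Hopf quasigroup, then `f(m₍₀₎ · S m₍₁₎) = f(m₍₀₎) · S m₍₁₎`. -/
theorem stmt15 {k : Type*} [Field k] {H : Type*} [AddCommGroup H] [Module k H]
    (Q : HopfQuasigroup k H)
    {M : Type*} [AddCommGroup M] [Module k M]
    {N : Type*} [AddCommGroup N] [Module k N]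
    (actM : M ⊗[k] H →ₗ[k] M) (ρM : M →ₗ[k] M ⊗[k] H)
    (actN : N ⊗[k] H →ₗ[k] N) (ρN : N →ₗ[k] N ⊗[k] H)
    (hM : Q.IsHopfModule actM ρM) (hN : Q.IsHopfModule actN ρN)
    (f : M →ₗ[k] N)
    (hcol : ∀ m : M, ρN (f m) = TensorProduct.map f LinearMap.id (ρM m))
    (hqlin : ∀ (m : M) (h : H),
      f (Q.inducedAct actM ρM (m ⊗ₜ[k] h)) = Q.inducedAct actN ρN (f m ⊗ₜ[k] h)) :
    ∀ m : M, f (actM (TensorProduct.map LinearMap.id Q.S (ρM m))) =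
      actN (TensorProduct.map f Q.S (ρM m)) := by
  obtain ⟨hMunit, hMcoassoc, hMcounit, -, -, -⟩ := hM
  obtain ⟨hNunit, hNcoassoc, hNcounit, -, -, -⟩ := hN
  have hquasi : f ∘ₗ Q.inducedAct actM ρM = Q.inducedAct actN ρN ∘ₗ map f LinearMap.id :=
    TensorProduct.ext' fun m h => by simpa using hqlin m h
  intro m
  calc f (actM (map LinearMap.id Q.S (ρM m)))
      = f (Q.inducedAct actM ρM (map LinearMap.id Q.S (ρM m))) := by
        rw [Q.inducedAct_lTensor_antipode_coaction actM ρM hMunit hMcounit hMcoassoc]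
    _ = Q.inducedAct actN ρN (map LinearMap.id Q.S (map f LinearMap.id (ρM m))) := by
        rw [← LinearMap.comp_apply f, hquasi, LinearMap.comp_apply]
        simp only [map_map, LinearMap.id_comp, LinearMap.comp_id]
    _ = actN (map LinearMap.id Q.S (ρN (f m))) := by
        rw [← hcol, Q.inducedAct_lTensor_antipode_coaction actN ρN hNunit hNcounit hNcoassoc]
    _ = actN (map f Q.S (ρM m)) := by
        rw [hcol, map_map, LinearMap.id_comp, LinearMap.comp_id]
end
end

section
/- Let H be a Hopf coquasigroup and M a right H-Hopf module with action (m,h) ↦ m·h and coaction ρ. Define λ : M → M⊗H by λ(m) = ((m₍₀₎₍₀₎·Sm₍₀₎₍₁₎)·m₍₁₎₍₁₎) ⊗ m₍₁₎₍₂₎, where m₍₀₎₍₀₎⊗m₍₀₎₍₁₎⊗m₍₁₎ = (ρ⊗id)(ρ(m)) and m₍₁₎₍₁₎⊗m₍₁₎₍₂₎ = Δ(m₍₁₎). Then M with the same action and the coaction λ is again a right H-Hopf module. -/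
open TensorProduct

noncomputable section

/-!
Write `E(m) = m₍₀₎ · S m₍₁₎`, so that `λ(m) = E(m₍₀₎) · m₍₁₎₍₁₎ ⊗ m₍₁₎₍₂₎`. The antipode of a
Hopf coquasigroup is antimultiplicative (the left Galois map `g ⊗ h ↦ g₍₁₎ ⊗ g₍₂₎ h` is injective)
and satisfies `h₍₁₎ S h₍₂₎ = ε(h) 1`; together these give `E(m · h) = ε(h) E(m)`, hence
`λ(m · h) = λ(m) Δ(h)` and `λ(E m) = E m ⊗ 1`. So every map `y ↦ E(x) · y` carries `Δ` to `λ`,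
and as `m = E(m₍₀₎) · m₍₁₎`, the counit and antipode axioms for `λ` are inherited from those
of `H` itself.
-/

section Sweedler

variable {R : Type*} [CommSemiring R] {A B C N : Type*} [AddCommMonoid A] [Module R A]
  [AddCommMonoid B] [Module R B] [AddCommMonoid C] [Module R C] [AddCommMonoid N] [Module R N]

/-- A chosen finite family of pure tensors summing to `x`: sums over it stand in for
Sweedler notation. -/
def sweedler (x : A ⊗[R] B) : Finset (A × B) := (TensorProduct.exists_finset x).choose

theorem sum_sweedler (x : A ⊗[R] B) : ∑ p ∈ sweedler x, p.1 ⊗ₜ[R] p.2 = x :=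
  (TensorProduct.exists_finset x).choose_spec.symm

theorem sum_sweedler_apply (Φ : A →ₗ[R] B →ₗ[R] C) (x : A ⊗[R] B) :
    ∑ p ∈ sweedler x, Φ p.1 p.2 = lift Φ x := by
  conv_rhs => rw [← sum_sweedler x]
  simp [map_sum]

theorem map_assoc_map_eq_sum (ρ : N →ₗ[R] N ⊗[R] B) (Ψ : B ⊗[R] B →ₗ[R] C) (n : N) :
    map LinearMap.id Ψ (TensorProduct.assoc R N B B (map ρ LinearMap.id (ρ n))) =
      ∑ p ∈ sweedler (ρ n), ∑ q ∈ sweedler (ρ p.1), q.1 ⊗ₜ[R] Ψ (q.2 ⊗ₜ[R] p.2) := by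
  conv_lhs => rw [← sum_sweedler (ρ n)]
  simp only [map_sum, map_tmul, LinearMap.id_coe, id_eq]
  refine Finset.sum_congr rfl fun p _ => ?_
  conv_lhs => rw [← sum_sweedler (ρ p.1)]
  simp [sum_tmul, map_sum]

end Sweedler

section Intertwine

variable {R : Type*} [CommSemiring R] {B C N P : Type*}
  [AddCommMonoid B] [Module R B] [AddCommMonoid C] [Module R C] [AddCommMonoid N] [Module R N]
  [AddCommMonoid P] [Module R P]
  {ρ : N →ₗ[R] N ⊗[R] B} {ρ' : P →ₗ[R] P ⊗[R] B} {f : N →ₗ[R] P}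

theorem rid_map_apply_of_intertwines (hf : ∀ n, ρ' (f n) = map f LinearMap.id (ρ n))
    (ε : B →ₗ[R] R) (n : N) :
    TensorProduct.rid R P (map LinearMap.id ε (ρ' (f n))) =
      f (TensorProduct.rid R N (map LinearMap.id ε (ρ n))) := by
  rw [hf]
  induction ρ n using TensorProduct.induction_on with
  | zero => simp
  | tmul x b => simp
  | add x y hx hy => simp only [map_add, hx, hy]

theorem map_assoc_map_apply_of_intertwines
    (hf : ∀ n, ρ' (f n) = map f LinearMap.id (ρ n)) (Ψ : B ⊗[R] B →ₗ[R] C) (n : N) :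
    map LinearMap.id Ψ (TensorProduct.assoc R P B B (map ρ' LinearMap.id (ρ' (f n)))) =
      map f LinearMap.id (map LinearMap.id Ψ
        (TensorProduct.assoc R N B B (map ρ LinearMap.id (ρ n)))) := by
  rw [hf]
  induction ρ n using TensorProduct.induction_on with
  | zero => simp
  | tmul x b =>
    simp only [map_tmul, LinearMap.id_coe, id_eq, hf]
    induction ρ x using TensorProduct.induction_on with
    | zero => simp
    | tmul y c => simp
    | add y z hy hz => simp only [map_add, TensorProduct.add_tmul, hy, hz]
  | add x y hx hy => simp only [map_add, hx, hy]

end Intertwine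

namespace BialgQ

variable {k : Type*} [Field k] {H : Type*} [AddCommGroup H] [Module k H] (D : BialgQ k H)
  {V : Type*} [AddCommGroup V] [Module k V]

theorem sum_counit_fst_smul (h : H) (Φ : H →ₗ[k] V) :
    ∑ p ∈ sweedler (D.comul h), D.counit p.1 • Φ p.2 = Φ h := by
  conv_rhs => rw [← D.counit_comul h, ← sum_sweedler (D.comul h)]
  simp [map_sum]

theorem sum_sum_counit_mul_smul (Φ : H →ₗ[k] H →ₗ[k] V) (a b : H) :
    ∑ p ∈ sweedler (D.comul a), ∑ q ∈ sweedler (D.comul b),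
      (D.counit p.1 * D.counit q.1) • Φ p.2 q.2 = Φ a b := by
  simp_rw [mul_smul, ← Finset.smul_sum, D.sum_counit_fst_smul b (Φ _)]
  exact D.sum_counit_fst_smul a (Φ.flip b)

theorem sum_sweedler_comul_mul (Φ : H →ₗ[k] H →ₗ[k] V) (a b : H) :
    ∑ p ∈ sweedler (D.comul (D.mul a b)), Φ p.1 p.2 =
      ∑ p ∈ sweedler (D.comul a), ∑ q ∈ sweedler (D.comul b),
        Φ (D.mul p.1 q.1) (D.mul p.2 q.2) := by
  have hab : D.comul (D.mul a b) = ∑ p ∈ sweedler (D.comul a), ∑ q ∈ sweedler (D.comul b),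
      D.mul p.1 q.1 ⊗ₜ[k] D.mul p.2 q.2 := by
    rw [D.comul_mul]
    conv_lhs => rw [← sum_sweedler (D.comul a), ← sum_sweedler (D.comul b)]
    simp [tmul2, map_sum]
    exact Finset.sum_comm
  rw [sum_sweedler_apply, hab]
  simp [map_sum]

end BialgQ

namespace HopfCoquasigroup

variable {k : Type*} [Field k] {H : Type*} [AddCommGroup H] [Module k H] (Q : HopfCoquasigroup k H)

theorem sum_tmul_mul_antipode (h : H) :
    ∑ p ∈ sweedler (Q.comul h), ∑ q ∈ sweedler (Q.comul p.1),
      q.1 ⊗ₜ[k] Q.mul q.2 (Q.S p.2) = h ⊗ₜ[k] Q.one := by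
  simpa [map_assoc_map_eq_sum] using Q.coantipode₃ h

theorem sum_tmul_antipode_mul (h : H) :
    ∑ p ∈ sweedler (Q.comul h), ∑ q ∈ sweedler (Q.comul p.1),
      q.1 ⊗ₜ[k] Q.mul (Q.S q.2) p.2 = h ⊗ₜ[k] Q.one := by
  simpa [map_assoc_map_eq_sum] using Q.coantipode₄ h

theorem sum_mul_antipode (h : H) :
    ∑ p ∈ sweedler (Q.comul h), Q.mul p.1 (Q.S p.2) = Q.counit h • Q.one := by
  have := congrArg (fun z => TensorProduct.lid k H (map Q.counit LinearMap.id z))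
    (Q.sum_tmul_mul_antipode h)
  simp only [map_sum, map_tmul, TensorProduct.lid_tmul, LinearMap.id_coe, id_eq] at this
  rw [← this]
  refine Finset.sum_congr rfl fun p _ => ?_
  exact (Q.sum_counit_fst_smul p.1 (Q.mul.flip (Q.S p.2))).symm

theorem lGalois_tmul (g y : H) :
    Q.lGalois (g ⊗ₜ[k] y) = ∑ p ∈ sweedler (Q.comul g), p.1 ⊗ₜ[k] Q.mul p.2 y := by
  simp only [BialgQ.lGalois, BialgQ.mulMap, LinearMap.comp_apply, map_tmul,
    LinearMap.id_coe, id_eq]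
  conv_lhs => rw [← sum_sweedler (Q.comul g)]
  simp [sum_tmul, map_sum]

theorem gammaInvOf_tmul (g y : H) :
    Q.gammaInvOf Q.S (g ⊗ₜ[k] y) = ∑ p ∈ sweedler (Q.comul g), p.1 ⊗ₜ[k] Q.mul (Q.S p.2) y := by
  simp only [BialgQ.gammaInvOf, BialgQ.mulMap, LinearMap.comp_apply, map_tmul,
    LinearMap.id_coe, id_eq]
  conv_lhs => rw [← sum_sweedler (Q.comul g)]
  simp [sum_tmul, map_sum]

theorem gammaInvOf_lGalois (z : H ⊗[k] H) : Q.gammaInvOf Q.S (Q.lGalois z) = z := by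
  induction z using TensorProduct.induction_on with
  | zero => simp
  | add x y hx hy => simp only [map_add, hx, hy]
  | tmul g y =>
    have key := congrArg (map LinearMap.id (Q.mul.flip y)) (Q.sum_tmul_antipode_mul g)
    simp only [map_sum, map_tmul, LinearMap.id_coe, id_eq, LinearMap.flip_apply,
      Q.one_mul, Q.mul_assoc] at key
    simp only [lGalois_tmul, map_sum, gammaInvOf_tmul, key]

theorem lGalois_mul_tmul (u v y : H) :
    Q.lGalois (Q.mul u v ⊗ₜ[k] y) = ∑ r ∈ sweedler (Q.comul u), ∑ t ∈ sweedler (Q.comul v),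
      Q.mul r.1 t.1 ⊗ₜ[k] Q.mul (Q.mul r.2 t.2) y := by
  rw [lGalois_tmul]
  exact Q.sum_sweedler_comul_mul ((TensorProduct.mk k H H).compl₂ (Q.mul.flip y)) u v

theorem lGalois_sum_mul_tmul_antipode_mul (a b : H) :
    Q.lGalois (∑ p ∈ sweedler (Q.comul a), ∑ q ∈ sweedler (Q.comul b),
        Q.mul p.1 q.1 ⊗ₜ[k] Q.mul (Q.S q.2) (Q.S p.2)) = Q.mul a b ⊗ₜ[k] Q.one := by
  have inner : ∀ p r : H × H, ∑ q ∈ sweedler (Q.comul b), ∑ t ∈ sweedler (Q.comul q.1),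
      Q.mul r.1 t.1 ⊗ₜ[k] Q.mul r.2 (Q.mul t.2 (Q.mul (Q.S q.2) (Q.S p.2))) =
        Q.mul r.1 b ⊗ₜ[k] Q.mul r.2 (Q.S p.2) := fun p r => by
    simpa [map_sum, Q.mul_assoc, Q.one_mul] using
      congrArg (map (Q.mul r.1) (Q.mul r.2 ∘ₗ Q.mul.flip (Q.S p.2)))
        (Q.sum_tmul_mul_antipode b)
  have outer : ∑ p ∈ sweedler (Q.comul a), ∑ r ∈ sweedler (Q.comul p.1),
      Q.mul r.1 b ⊗ₜ[k] Q.mul r.2 (Q.S p.2) = Q.mul a b ⊗ₜ[k] Q.one := by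
    simpa [map_sum] using
      congrArg (map (Q.mul.flip b) LinearMap.id) (Q.sum_tmul_mul_antipode a)
  calc _ = ∑ p ∈ sweedler (Q.comul a), ∑ q ∈ sweedler (Q.comul b),
          ∑ r ∈ sweedler (Q.comul p.1), ∑ t ∈ sweedler (Q.comul q.1),
            Q.mul r.1 t.1 ⊗ₜ[k] Q.mul r.2 (Q.mul t.2 (Q.mul (Q.S q.2) (Q.S p.2))) := by
        simp only [map_sum, lGalois_mul_tmul, Q.mul_assoc]
    _ = ∑ p ∈ sweedler (Q.comul a), ∑ r ∈ sweedler (Q.comul p.1),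
          ∑ q ∈ sweedler (Q.comul b), ∑ t ∈ sweedler (Q.comul q.1),
            Q.mul r.1 t.1 ⊗ₜ[k] Q.mul r.2 (Q.mul t.2 (Q.mul (Q.S q.2) (Q.S p.2))) :=
        Finset.sum_congr rfl fun _ _ => Finset.sum_comm
    _ = _ := by simp only [inner, outer]

theorem antipode_mul (a b : H) : Q.S (Q.mul a b) = Q.mul (Q.S b) (Q.S a) := by
  have hγ : Q.gammaInvOf Q.S (Q.mul a b ⊗ₜ[k] Q.one) =
      ∑ p ∈ sweedler (Q.comul a), ∑ q ∈ sweedler (Q.comul b),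
        Q.mul p.1 q.1 ⊗ₜ[k] Q.S (Q.mul p.2 q.2) := by
    rw [gammaInvOf_tmul]
    simpa [Q.mul_one] using Q.sum_sweedler_comul_mul ((TensorProduct.mk k H H).compl₂ Q.S) a b
  have hX := congrArg (Q.gammaInvOf Q.S) (Q.lGalois_sum_mul_tmul_antipode_mul a b)
  rw [gammaInvOf_lGalois, hγ] at hX
  have hε := congrArg (fun z => TensorProduct.lid k H (map Q.counit LinearMap.id z)) hX
  simp only [map_sum, map_tmul, TensorProduct.lid_tmul, LinearMap.id_coe, id_eq,
    Q.counit_mul] at hε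
  calc Q.S (Q.mul a b)
      = ∑ p ∈ sweedler (Q.comul a), ∑ q ∈ sweedler (Q.comul b),
          (Q.counit p.1 * Q.counit q.1) • Q.S (Q.mul p.2 q.2) :=
        (Q.sum_sum_counit_mul_smul (Q.mul.compr₂ Q.S) a b).symm
    _ = ∑ p ∈ sweedler (Q.comul a), ∑ q ∈ sweedler (Q.comul b),
          (Q.counit p.1 * Q.counit q.1) • Q.mul (Q.S q.2) (Q.S p.2) := hε.symm
    _ = Q.mul (Q.S b) (Q.S a) := Q.sum_sum_counit_mul_smul (Q.mul.flip.compl₁₂ Q.S Q.S) a b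

variable {M : Type*} [AddCommGroup M] [Module k M] (act : M ⊗[k] H →ₗ[k] M) (ρ : M →ₗ[k] M ⊗[k] H)

def coinvProj : M →ₗ[k] M :=
  act ∘ₗ map LinearMap.id Q.S ∘ₗ ρ

/-- `x ⊗ h ↦ E(x) · h₍₁₎ ⊗ h₍₂₎`, where `E = coinvProj`; the induced coaction is
`projComul ∘ ρ`. -/
def projComul : M ⊗[k] H →ₗ[k] M ⊗[k] H :=
  map act LinearMap.id ∘ₗ (TensorProduct.assoc k M H H).symm.toLinearMap ∘ₗ
    map (Q.coinvProj act ρ) Q.comul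

theorem coinvProj_apply (m : M) :
    Q.coinvProj act ρ m = ∑ p ∈ sweedler (ρ m), act (p.1 ⊗ₜ[k] Q.S p.2) := by
  simp only [coinvProj, LinearMap.comp_apply]
  conv_lhs => rw [← sum_sweedler (ρ m)]
  simp [map_sum]

theorem projComul_tmul (x : M) (h : H) :
    Q.projComul act ρ (x ⊗ₜ[k] h) =
      ∑ r ∈ sweedler (Q.comul h), act (Q.coinvProj act ρ x ⊗ₜ[k] r.1) ⊗ₜ[k] r.2 := by
  simp only [projComul, LinearMap.comp_apply, map_tmul]
  conv_lhs => rw [← sum_sweedler (Q.comul h)]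
  simp [tmul_sum, map_sum]

theorem projComul_tmul_mul (x : M) (u v : H) :
    Q.projComul act ρ (x ⊗ₜ[k] Q.mul u v) =
      ∑ r ∈ sweedler (Q.comul u), ∑ s ∈ sweedler (Q.comul v),
        act (Q.coinvProj act ρ x ⊗ₜ[k] Q.mul r.1 s.1) ⊗ₜ[k] Q.mul r.2 s.2 := by
  rw [projComul_tmul]
  exact Q.sum_sweedler_comul_mul
    ((TensorProduct.mk k M H).compl₁₂ (act ∘ₗ TensorProduct.mk k M H (Q.coinvProj act ρ x))
      LinearMap.id) u v

theorem inducedCoact_apply (m : M) : Q.inducedCoact act ρ m = Q.projComul act ρ (ρ m) := by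
  simp only [inducedCoact, projComul, coinvProj, LinearMap.comp_apply]
  rw [← LinearMap.comp_apply (map _ _) (map _ _),
    ← TensorProduct.map_comp, LinearMap.id_comp]
  rfl

end HopfCoquasigroup

namespace HopfCoquasigroup.IsHopfModule

variable {k : Type*} [Field k] {H : Type*} [AddCommGroup H] [Module k H] {Q : HopfCoquasigroup k H}
  {M : Type*} [AddCommGroup M] [Module k M] {act : M ⊗[k] H →ₗ[k] M} {ρ : M →ₗ[k] M ⊗[k] H}

theorem act_act (hM : Q.IsHopfModule act ρ) (m : M) (g h : H) :
    act (act (m ⊗ₜ[k] g) ⊗ₜ[k] h) = act (m ⊗ₜ[k] Q.mul g h) :=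
  hM.2.1 m g h

theorem sum_tmul_mul_antipode (hM : Q.IsHopfModule act ρ) (m : M) :
    ∑ p ∈ sweedler (ρ m), ∑ q ∈ sweedler (ρ p.1), q.1 ⊗ₜ[k] Q.mul q.2 (Q.S p.2) =
      m ⊗ₜ[k] Q.one := by
  simpa [map_assoc_map_eq_sum] using hM.2.2.2.1 m

theorem sum_tmul_antipode_mul (hM : Q.IsHopfModule act ρ) (m : M) :
    ∑ p ∈ sweedler (ρ m), ∑ q ∈ sweedler (ρ p.1), q.1 ⊗ₜ[k] Q.mul (Q.S q.2) p.2 =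
      m ⊗ₜ[k] Q.one := by
  simpa [map_assoc_map_eq_sum] using hM.2.2.2.2.1 m

theorem coact_act (hM : Q.IsHopfModule act ρ) (m : M) (h : H) :
    ρ (act (m ⊗ₜ[k] h)) = ∑ p ∈ sweedler (ρ m), ∑ q ∈ sweedler (Q.comul h),
      act (p.1 ⊗ₜ[k] q.1) ⊗ₜ[k] Q.mul p.2 q.2 := by
  rw [hM.2.2.2.2.2 m h]
  conv_lhs => rw [← sum_sweedler (ρ m), ← sum_sweedler (Q.comul h)]
  simp [sum_tmul, tmul_sum, map_sum]
  exact Finset.sum_comm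

theorem coinvProj_act (hM : Q.IsHopfModule act ρ) (m : M) (h : H) :
    Q.coinvProj act ρ (act (m ⊗ₜ[k] h)) = Q.counit h • Q.coinvProj act ρ m := by
  calc Q.coinvProj act ρ (act (m ⊗ₜ[k] h))
      = ∑ p ∈ sweedler (ρ m), ∑ q ∈ sweedler (Q.comul h),
          act (p.1 ⊗ₜ[k] Q.mul (Q.mul q.1 (Q.S q.2)) (Q.S p.2)) := by
        simp only [coinvProj, LinearMap.comp_apply, hM.coact_act, map_sum, map_tmul,
          LinearMap.id_coe, id_eq, Q.antipode_mul, hM.act_act, Q.mul_assoc]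
    _ = ∑ p ∈ sweedler (ρ m), Q.counit h • act (p.1 ⊗ₜ[k] Q.S p.2) := by
        refine Finset.sum_congr rfl fun p _ => ?_
        simpa [map_sum, Q.one_mul] using
          congrArg (act ∘ₗ TensorProduct.mk k M H p.1 ∘ₗ Q.mul.flip (Q.S p.2))
            (Q.sum_mul_antipode h)
    _ = Q.counit h • Q.coinvProj act ρ m := by rw [coinvProj_apply, Finset.smul_sum]

theorem sum_act_coinvProj (hM : Q.IsHopfModule act ρ) (m : M) :
    ∑ p ∈ sweedler (ρ m), act (Q.coinvProj act ρ p.1 ⊗ₜ[k] p.2) = m := by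
  have h := congrArg act (hM.sum_tmul_antipode_mul m)
  simp only [map_sum, hM.1] at h
  conv_rhs => rw [← h]
  simp only [coinvProj_apply, sum_tmul, map_sum, hM.act_act]

theorem projComul_act_tmul (hM : Q.IsHopfModule act ρ) (u : M) (v c : H) :
    Q.projComul act ρ (act (u ⊗ₜ[k] v) ⊗ₜ[k] c) = Q.counit v • Q.projComul act ρ (u ⊗ₜ[k] c) := by
  simp only [projComul_tmul, hM.coinvProj_act, ← smul_tmul', map_smul, Finset.smul_sum]

theorem inducedCoact_act_eq_sum (hM : Q.IsHopfModule act ρ) (x : M) (g : H) :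
    Q.inducedCoact act ρ (act (x ⊗ₜ[k] g)) =
      ∑ p ∈ sweedler (ρ x), Q.projComul act ρ (p.1 ⊗ₜ[k] Q.mul p.2 g) := by
  rw [inducedCoact_apply, hM.coact_act]
  simp only [map_sum, hM.projComul_act_tmul]
  refine Finset.sum_congr rfl fun p _ => ?_
  exact Q.sum_counit_fst_smul g (Q.projComul act ρ ∘ₗ TensorProduct.mk k M H p.1 ∘ₗ Q.mul p.2)

theorem inducedCoact_coinvProj (hM : Q.IsHopfModule act ρ) (m : M) :
    Q.inducedCoact act ρ (Q.coinvProj act ρ m) = Q.coinvProj act ρ m ⊗ₜ[k] Q.one := by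
  calc Q.inducedCoact act ρ (Q.coinvProj act ρ m)
      = Q.projComul act ρ (∑ p ∈ sweedler (ρ m), ∑ q ∈ sweedler (ρ p.1),
          q.1 ⊗ₜ[k] Q.mul q.2 (Q.S p.2)) := by
        simp only [coinvProj_apply, map_sum, hM.inducedCoact_act_eq_sum]
    _ = Q.coinvProj act ρ m ⊗ₜ[k] Q.one := by
        simp [hM.sum_tmul_mul_antipode, projComul, Q.comul_one, hM.1]

theorem inducedCoact_act (hM : Q.IsHopfModule act ρ) (m : M) (h : H) :
    Q.inducedCoact act ρ (act (m ⊗ₜ[k] h)) =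
      map act (lift Q.mul)
        (TensorProduct.tensorTensorTensorComm k M H H H
          (Q.inducedCoact act ρ m ⊗ₜ[k] Q.comul h)) := by
  rw [hM.inducedCoact_act_eq_sum, inducedCoact_apply]
  conv_rhs => rw [← sum_sweedler (ρ m), ← sum_sweedler (Q.comul h)]
  simp only [projComul_tmul_mul]
  simp only [map_sum, projComul_tmul, sum_tmul, tmul_sum, tensorTensorTensorComm_tmul, map_tmul,
    lift.tmul, hM.act_act]
  rw [Finset.sum_comm]
  exact Finset.sum_congr rfl fun _ _ => Finset.sum_comm

theorem inducedCoact_act_coinvProj (hM : Q.IsHopfModule act ρ) (x : M) (y : H) :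
    Q.inducedCoact act ρ ((act ∘ₗ TensorProduct.mk k M H (Q.coinvProj act ρ x)) y) =
      map (act ∘ₗ TensorProduct.mk k M H (Q.coinvProj act ρ x)) LinearMap.id (Q.comul y) := by
  simp only [LinearMap.comp_apply, TensorProduct.mk_apply, hM.inducedCoact_act,
    hM.inducedCoact_coinvProj]
  conv_lhs => rw [← sum_sweedler (Q.comul y)]
  conv_rhs => rw [← sum_sweedler (Q.comul y)]
  simp [tmul_sum, map_sum, Q.one_mul]

theorem rid_map_counit_inducedCoact (hM : Q.IsHopfModule act ρ) (m : M) :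
    TensorProduct.rid k M (map LinearMap.id Q.counit (Q.inducedCoact act ρ m)) = m := by
  conv_lhs => rw [← hM.sum_act_coinvProj m]
  conv_rhs => rw [← hM.sum_act_coinvProj m]
  simp only [map_sum]
  refine Finset.sum_congr rfl fun p _ => ?_
  refine (rid_map_apply_of_intertwines (hM.inducedCoact_act_coinvProj p.1) Q.counit p.2).trans ?_
  rw [Q.comul_counit]
  rfl

theorem map_assoc_map_inducedCoact (hM : Q.IsHopfModule act ρ) (Ψ : H ⊗[k] H →ₗ[k] H)
    (hΨ : ∀ h, map LinearMap.id Ψ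
      (TensorProduct.assoc k H H H (map Q.comul LinearMap.id (Q.comul h))) =
        h ⊗ₜ[k] Q.one) (m : M) :
    map LinearMap.id Ψ (TensorProduct.assoc k M H H
      (map (Q.inducedCoact act ρ) LinearMap.id (Q.inducedCoact act ρ m))) =
        m ⊗ₜ[k] Q.one := by
  conv_lhs => rw [← hM.sum_act_coinvProj m]
  conv_rhs => rw [← hM.sum_act_coinvProj m]
  simp only [map_sum, sum_tmul]
  refine Finset.sum_congr rfl fun p _ => ?_
  refine (map_assoc_map_apply_of_intertwines (hM.inducedCoact_act_coinvProj p.1) Ψ p.2).trans ?_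
  rw [hΨ]
  rfl

end HopfCoquasigroup.IsHopfModule

/-- For a right Hopf module `M` over a Hopf coquasigroup, `M` with the same
action and the induced coaction `λ(m) = ((m₍₀₎₍₀₎·Sm₍₀₎₍₁₎)·m₍₁₎₍₁₎) ⊗ m₍₁₎₍₂₎` is again a
right `H`-Hopf module. -/
theorem stmt17 {k : Type*} [Field k] {H : Type*} [AddCommGroup H] [Module k H]
    (Q : HopfCoquasigroup k H) {M : Type*} [AddCommGroup M] [Module k M]
    (act : M ⊗[k] H →ₗ[k] M) (ρ : M →ₗ[k] M ⊗[k] H)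
    (hM : Q.IsHopfModule act ρ) :
    Q.IsHopfModule act (Q.inducedCoact act ρ) :=
  ⟨hM.1, hM.2.1, hM.rid_map_counit_inducedCoact, hM.map_assoc_map_inducedCoact _ Q.coantipode₃,
    hM.map_assoc_map_inducedCoact _ Q.coantipode₄, hM.inducedCoact_act⟩
end
end
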